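/- arXiv:2111.00697 — 2 statements merged into one kernel-verified Lean document; each statement's English description precedes it below -/
import Mathlib

section
/- Let π be a probability vector fixed by a reversible stochastic matrix P (i.e. πP = π and detailed balance holds), diagonalized as P = D_π^{-1/2}U^TΛUD_π^{1/2} with eigenvectors ξ_ℓ and eigenvalues λ_ℓ (with λ_1 = 1 and ξ_1 constant). If for some i ≠ j the L¹ distance between rows satisfies ‖P_i − P_j‖_1 > δ q λ_2, then there exists ℓ ≥ 2 such that |ξ_ℓ(i) − ξ_ℓ(j)| ≥ δ. -/
/-!
Writing `d ℓ = ξ_ℓ(i) - ξ_ℓ(j)`, the diagonalization gives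
`P i k - P j k = ∑ ℓ, λ_ℓ d ℓ · U ℓ k √π_k`, and `d 0 = 0` because `ξ_1` is constant.
By Cauchy–Schwarz each vector `k ↦ U ℓ k √π_k` has `ℓ¹`-norm at most `‖u_ℓ‖₂ ‖√π‖₂ = 1`, so
`‖P_i − P_j‖₁ ≤ ∑ ℓ, |λ_ℓ d ℓ|`. If every `|d ℓ|`, `ℓ ≠ 0`, were below `δ`, this would be at
most `q λ₂ δ`.
-/

open Finset Matrix

theorem diagonal_mul_transpose_mul_diagonal_mul_mul_diagonal_apply {n R : Type*} [Fintype n]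
    [DecidableEq n] [CommSemiring R] (a b lam : n → R) (U : Matrix n n R) (x y : n) :
    (diagonal a * Uᵀ * diagonal lam * U * diagonal b) x y =
      ∑ ℓ, a x * U ℓ x * lam ℓ * U ℓ y * b y := by
  simp [Matrix.mul_apply, Matrix.diagonal_apply, Finset.sum_mul]

theorem sum_abs_sum_mul_le_sum_abs {ι κ : Type*} [Fintype ι] [Fintype κ] (c : ι → ℝ)
    (v : ι → κ → ℝ) (hv : ∀ ℓ, ∑ k, |v ℓ k| ≤ 1) :
    ∑ k, |∑ ℓ, c ℓ * v ℓ k| ≤ ∑ ℓ, |c ℓ| :=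
  calc ∑ k, |∑ ℓ, c ℓ * v ℓ k|
      ≤ ∑ k, ∑ ℓ, |c ℓ| * |v ℓ k| :=
        sum_le_sum fun k _ => (abs_sum_le_sum_abs _ _).trans_eq (by simp only [abs_mul])
    _ = ∑ ℓ, |c ℓ| * ∑ k, |v ℓ k| := by rw [sum_comm]; simp only [mul_sum]
    _ ≤ ∑ ℓ, |c ℓ| := sum_le_sum fun ℓ _ => mul_le_of_le_one_right (abs_nonneg _) (hv ℓ)

theorem sum_abs_mul_sqrt_le_one {κ : Type*} [Fintype κ] (u w : κ → ℝ) (hw : ∀ k, 0 ≤ w k)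
    (hu : ∑ k, u k ^ 2 = 1) (hwsum : ∑ k, w k = 1) :
    ∑ k, |u k * √(w k)| ≤ 1 :=
  calc ∑ k, |u k * √(w k)| = ∑ k, √(u k ^ 2) * √(w k) := by
        simp only [abs_mul, Real.sqrt_sq_eq_abs, abs_of_nonneg (Real.sqrt_nonneg _)]
    _ ≤ √(∑ k, u k ^ 2) * √(∑ k, w k) :=
        Real.sum_sqrt_mul_sqrt_le _ (fun k => sq_nonneg (u k)) hw
    _ = 1 := by rw [hu, hwsum, Real.sqrt_one, one_mul]

theorem sum_sq_row_eq_one_of_mul_transpose_eq_one {n : Type*} [Fintype n] [DecidableEq n]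
    {U : Matrix n n ℝ} (hU : U * Uᵀ = 1) (ℓ : n) : ∑ k, U ℓ k ^ 2 = 1 := by
  simpa [Matrix.mul_apply, sq] using congrFun (congrFun hU ℓ) ℓ

theorem stmt5_general (q : ℕ) [NeZero q] (P : Matrix (Fin q) (Fin q) ℝ) (π : Fin q → ℝ)
    (hπpos : ∀ i, 0 < π i) (hπsum : ∑ i, π i = 1)
    (U : Matrix (Fin q) (Fin q) ℝ) (lam : Fin q → ℝ) (lam2 δ : ℝ)
    (hUorth : U * U.transpose = 1)
    (hU0 : ∀ j, U 0 j = Real.sqrt (π j))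
    (hlam2 : 0 ≤ lam2) (hlam : ∀ ℓ, ℓ ≠ 0 → |lam ℓ| ≤ lam2)
    (hδ : 0 < δ)
    (hdiag : P = Matrix.diagonal (fun i => (Real.sqrt (π i))⁻¹) * U.transpose *
      Matrix.diagonal lam * U * Matrix.diagonal (fun i => Real.sqrt (π i)))
    (i j : Fin q)
    (hL1 : ∑ k, |P i k - P j k| > δ * q * lam2) :
    ∃ ℓ : Fin q, ℓ ≠ 0 ∧
      δ ≤ |(Real.sqrt (π i))⁻¹ * U ℓ i - (Real.sqrt (π j))⁻¹ * U ℓ j| := by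
  by_contra! hsmall
  set d : Fin q → ℝ := fun ℓ => (√(π i))⁻¹ * U ℓ i - (√(π j))⁻¹ * U ℓ j
  have hdiff : ∀ k, P i k - P j k = ∑ ℓ, lam ℓ * d ℓ * (U ℓ k * √(π k)) := fun k => by
    simp only [hdiag, diagonal_mul_transpose_mul_diagonal_mul_mul_diagonal_apply, d,
      ← sum_sub_distrib, mul_sub]
    exact sum_congr rfl fun ℓ _ => by ring
  have hd0 : d 0 = 0 := by
    simp [d, hU0, inv_mul_cancel₀ (Real.sqrt_pos.2 (hπpos _)).ne']
  have hcoef : ∀ ℓ, |lam ℓ * d ℓ| ≤ lam2 * δ := fun ℓ => by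
    rcases eq_or_ne ℓ 0 with rfl | hℓ
    · simpa [hd0] using mul_nonneg hlam2 hδ.le
    · rw [abs_mul]
      exact mul_le_mul (hlam ℓ hℓ) (hsmall ℓ hℓ).le (abs_nonneg _) hlam2
  have hrows : ∀ ℓ, ∑ k, |U ℓ k * √(π k)| ≤ 1 := fun ℓ =>
    sum_abs_mul_sqrt_le_one _ _ (fun k => (hπpos k).le)
      (sum_sq_row_eq_one_of_mul_transpose_eq_one hUorth ℓ) hπsum
  have hbound : ∑ k, |P i k - P j k| ≤ q * (lam2 * δ) :=
    calc ∑ k, |P i k - P j k| ≤ ∑ ℓ, |lam ℓ * d ℓ| := by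
          simpa only [hdiff] using sum_abs_sum_mul_le_sum_abs _ _ hrows
      _ ≤ ∑ _ℓ : Fin q, lam2 * δ := sum_le_sum fun ℓ _ => hcoef ℓ
      _ = q * (lam2 * δ) := by simp
  linarith

/-- Let `P` be reversible with respect to the positive probability vector `π`,
diagonalized as `P = D_π^{-1/2} Uᵀ Λ U D_π^{1/2}` with eigenvectors `ξ_ℓ(i) = π_i^{-1/2} U ℓ i`,
`λ_1 = 1` with constant eigenvector (`U 0 j = √(π j)`), and `|λ_ℓ| ≤ λ₂` for `ℓ ≠ 0`.
If `‖P_i − P_j‖₁ > δ q λ₂` for some `i ≠ j`, then some `ℓ ≠ 0` has `|ξ_ℓ(i) − ξ_ℓ(j)| ≥ δ`. -/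
theorem stmt5 (q : ℕ) [NeZero q] (P : Matrix (Fin q) (Fin q) ℝ) (π : Fin q → ℝ)
    (hπpos : ∀ i, 0 < π i) (hπsum : ∑ i, π i = 1)
    (hstoch : ∀ i, ∑ j, P i j = 1) (hPnonneg : ∀ i j, 0 ≤ P i j)
    (hrev : ∀ i j, π i * P i j = π j * P j i)
    (U : Matrix (Fin q) (Fin q) ℝ) (lam : Fin q → ℝ) (lam2 δ : ℝ)
    (hUorth : U * U.transpose = 1) (hUorth' : U.transpose * U = 1)
    (hU0 : ∀ j, U 0 j = Real.sqrt (π j))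
    (hlam0 : lam 0 = 1) (hlam2 : 0 ≤ lam2) (hlam : ∀ ℓ, ℓ ≠ 0 → |lam ℓ| ≤ lam2)
    (hδ : 0 < δ)
    (hdiag : P = Matrix.diagonal (fun i => (Real.sqrt (π i))⁻¹) * U.transpose *
      Matrix.diagonal lam * U * Matrix.diagonal (fun i => Real.sqrt (π i)))
    (i j : Fin q) (hij : i ≠ j)
    (hL1 : ∑ k, |P i k - P j k| > δ * q * lam2) :
    ∃ ℓ : Fin q, ℓ ≠ 0 ∧
      δ ≤ |(Real.sqrt (π i))⁻¹ * U ℓ i - (Real.sqrt (π j))⁻¹ * U ℓ j| :=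
  stmt5_general q P π hπpos hπsum U lam lam2 δ hUorth hU0 hlam2 hlam hδ hdiag i j hL1
end

section
/- Consider a Galton-Watson tree with Poisson(d) offspring distribution. Let P_{2ℓ,k} be the number of pairs of distinct vertices at depth k whose graph distance in the tree is exactly 2ℓ (equivalently, paths of length 2ℓ between depth-k leaves). Then E[P_{2ℓ,k}] = d^{k+ℓ} for 1 ≤ ℓ ≤ k. -/
/-!
A pair of depth-`k` vertices diverging at depth `m = k - ℓ` is `(w ++ a :: s, w ++ b :: t)` with
`|w| = m`, `a ≠ b` and `|s| = |t| = ℓ - 1`. Both lie in the tree iff each of the `k + ℓ - 1`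
distinct vertices on the two paths has more children than the index of the next step, the
branch vertex `w` needing more than `max a b`. By independence the probability of this is a
product of tails `P(N > c)`, and summing over the parameters turns every factor into
`∑ c, P(N > c) = E N = d`, except the one at `w`, which becomes
`∑_{a ≠ b} P(N > max a b) = E[N(N - 1)] = d²`. So the expectation is
`d ^ m * d ^ 2 * d ^ (2 (ℓ - 1)) = d ^ (k + ℓ)`.
-/

open MeasureTheory ProbabilityTheory

/-- A vertex of the (infinite-index) Galton–Watson tree is a finite string of naturals;
`v` belongs to the tree in sample `ω` if every coordinate is below the number of children
of the corresponding prefix. -/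
def memTree {Ω : Type*} (N : List ℕ → Ω → ℕ) (ω : Ω) (v : List ℕ) : Prop :=
  ∀ l a, l ++ [a] <+: v → a < N l ω

open Set
open scoped ENNReal NNReal Nat

theorem lintegral_descFactorial_poissonMeasure (r : ℝ≥0) (j : ℕ) :
    ∫⁻ n, (n.descFactorial j : ℝ≥0∞) ∂poissonMeasure r = (r : ℝ≥0∞) ^ j := by
  have hshift (n : ℕ) : ((n + j).descFactorial j : ℝ≥0∞) * poissonMeasure r {n + j} =
      (r : ℝ≥0∞) ^ j * poissonMeasure r {n} := by
    have hfac : ((n + j)! : ℝ) = n ! * (n + j).descFactorial j := by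
      exact_mod_cast (Nat.add_sub_cancel n j ▸
        Nat.factorial_mul_descFactorial (Nat.le_add_left j n)).symm
    rw [poissonMeasure_singleton, poissonMeasure_singleton, ← ENNReal.ofReal_natCast,
      ← ENNReal.ofReal_coe_nnreal, ← ENNReal.ofReal_pow (NNReal.coe_nonneg r),
      ← ENNReal.ofReal_mul (by positivity), ← ENNReal.ofReal_mul (by positivity), hfac]
    congr 1
    field_simp
    ring
  have hlow : ∑ n ∈ Finset.range j, (n.descFactorial j : ℝ≥0∞) * poissonMeasure r {n} = 0 :=
    Finset.sum_eq_zero fun n hn => by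
      rw [Nat.descFactorial_of_lt (Finset.mem_range.mp hn), Nat.cast_zero, zero_mul]
  calc ∫⁻ n, (n.descFactorial j : ℝ≥0∞) ∂poissonMeasure r
      = ∑' n, (n.descFactorial j : ℝ≥0∞) * poissonMeasure r {n} := lintegral_countable' _
    _ = ∑' n, ((n + j).descFactorial j : ℝ≥0∞) * poissonMeasure r {n + j} := by
      rw [← ENNReal.summable.sum_add_tsum_nat_add', hlow, zero_add]
    _ = (r : ℝ≥0∞) ^ j * ∑' n, 1 * poissonMeasure r {n} := by
      simp only [hshift, one_mul, ENNReal.tsum_mul_left]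
    _ = (r : ℝ≥0∞) ^ j := by
      rw [← lintegral_countable', lintegral_one, measure_univ, mul_one]

theorem lintegral_natCast_poissonMeasure (r : ℝ≥0) :
    ∫⁻ n, (n : ℝ≥0∞) ∂poissonMeasure r = r := by
  simpa using lintegral_descFactorial_poissonMeasure r 1

theorem tsum_indicator_Ioi (n : ℕ) : ∑' c, (Ioi c).indicator (1 : ℕ → ℝ≥0∞) n = n := by
  rw [tsum_eq_sum (s := Finset.range n) fun c hc => by simp_all]
  simp [Set.indicator_apply, Finset.filter_true_of_mem]

theorem tsum_measure_Ioi (ν : Measure ℕ) : ∑' c, ν (Ioi c) = ∫⁻ n, (n : ℝ≥0∞) ∂ν := by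
  simp_rw [← lintegral_indicator_one measurableSet_Ioi,
    ← lintegral_tsum fun _ => (measurable_of_countable _).aemeasurable, tsum_indicator_Ioi]

theorem tsum_indicator_Ioi_max (n : ℕ) :
    ∑' ab : {ab : ℕ × ℕ // ab.1 ≠ ab.2}, (Ioi (max ab.1.1 ab.1.2)).indicator (1 : ℕ → ℝ≥0∞) n =
      n.descFactorial 2 := by
  have hind (ab : ℕ × ℕ) : {ab : ℕ × ℕ | ab.1 ≠ ab.2}.indicator
      (fun ab => (Ioi (max ab.1 ab.2)).indicator (1 : ℕ → ℝ≥0∞) n) ab =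
      ((Finset.range n).offDiag : Set (ℕ × ℕ)).indicator 1 ab := by
    by_cases h : ab.1 ≠ ab.2 ∧ max ab.1 ab.2 < n <;>
      simp_all [Set.indicator_apply, and_comm]
  have hcard : (Finset.range n).offDiag.card = n.descFactorial 2 := by
    rw [Finset.offDiag_card, Finset.card_range, Nat.descFactorial_succ, Nat.descFactorial_one,
      Nat.sub_one_mul, Nat.mul_comm]
  refine (tsum_subtype {ab : ℕ × ℕ | ab.1 ≠ ab.2}
      (fun ab => (Ioi (max ab.1 ab.2)).indicator (1 : ℕ → ℝ≥0∞) n)).trans ?_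
  rw [tsum_congr hind, ← tsum_subtype, Finset.tsum_subtype']
  simp [hcard]

theorem tsum_measure_Ioi_max (ν : Measure ℕ) :
    ∑' ab : {ab : ℕ × ℕ // ab.1 ≠ ab.2}, ν (Ioi (max ab.1.1 ab.1.2)) =
      ∫⁻ n, (n.descFactorial 2 : ℝ≥0∞) ∂ν := by
  simp_rw [← lintegral_indicator_one measurableSet_Ioi,
    ← lintegral_tsum fun _ => (measurable_of_countable _).aemeasurable, tsum_indicator_Ioi_max]

theorem ENNReal.tsum_vector_prod_map {α : Type*} (f : α → ℝ≥0∞) :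
    ∀ n, ∑' v : List.Vector α n, (v.toList.map f).prod = (∑' a, f a) ^ n
  | 0 => by
    rw [tsum_eq_single List.Vector.nil fun v hv => absurd v.eq_nil hv]
    simp
  | n + 1 => by
    let cons : α × List.Vector α n ≃ List.Vector α (n + 1) :=
      { toFun := fun p => p.1 ::ᵥ p.2
        invFun := fun v => (v.head, v.tail)
        left_inv := fun p => by simp
        right_inv := fun v => by simp }
    rw [← cons.tsum_eq, ENNReal.tsum_prod', pow_succ', ← ENNReal.tsum_vector_prod_map f n,
      ← ENNReal.tsum_mul_right]
    refine tsum_congr fun a => ?_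
    rw [← ENNReal.tsum_mul_left]
    simp [cons]

theorem Set.ncard_eq_toReal_encard {α : Type*} (s : Set α) :
    (s.ncard : ℝ) = (s.encard : ℝ≥0∞).toReal := by
  rcases s.finite_or_infinite with hs | hs
  · rw [← hs.cast_ncard_eq]
    simp
  · simp [hs.ncard, hs.encard_eq]

theorem integral_ncard_setOf_mem {Ω ι : Type*} [MeasurableSpace Ω] {μ : Measure Ω} [Countable ι]
    {E : ι → Set Ω} (hE : ∀ i, MeasurableSet (E i)) (hfin : ∑' i, μ (E i) ≠ ∞) :
    ∫ ω, ({i | ω ∈ E i}.ncard : ℝ) ∂μ = (∑' i, μ (E i)).toReal := by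
  have hmeas (i : ι) : Measurable ((E i).indicator (1 : Ω → ℝ≥0∞)) :=
    measurable_one.indicator (hE i)
  have hcount (ω : Ω) : ∑' i, (E i).indicator (1 : Ω → ℝ≥0∞) ω = {i | ω ∈ E i}.encard := by
    rw [← ENNReal.tsum_set_one, tsum_subtype {i | ω ∈ E i} fun _ => (1 : ℝ≥0∞)]
    exact tsum_congr fun i => by by_cases h : ω ∈ E i <;> simp [h]
  have hlintegral : ∫⁻ ω, ∑' i, (E i).indicator 1 ω ∂μ = ∑' i, μ (E i) := by
    rw [lintegral_tsum fun i => (hmeas i).aemeasurable]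
    simp_rw [lintegral_indicator_one (hE _)]
  have hmeas_sum : Measurable fun ω => ∑' i, (E i).indicator (1 : Ω → ℝ≥0∞) ω :=
    Measurable.tsum hmeas
  simp_rw [Set.ncard_eq_toReal_encard, ← hcount]
  rw [integral_toReal hmeas_sum.aemeasurable (ae_lt_top hmeas_sum (hlintegral ▸ hfin)), hlintegral]

theorem ProbabilityTheory.iIndepFun.measure_forall_mem_lt {Ω : Type*} [MeasurableSpace Ω]
    {μ : Measure Ω} {N : List ℕ → Ω → ℕ} (hN : iIndepFun N μ) {L : List (List ℕ × ℕ)}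
    (hL : (L.map Prod.fst).Nodup) :
    μ {ω | ∀ x ∈ L, x.2 < N x.1 ω} = (L.map fun x => μ {ω | x.2 < N x.1 ω}).prod := by
  classical
  have hinj : Function.Injective fun x : L.toFinset => x.1.1 := fun x y hxy =>
    Subtype.ext (List.inj_on_of_nodup_map hL (List.mem_toFinset.mp x.2)
      (List.mem_toFinset.mp y.2) hxy)
  have hevent : {ω | ∀ x ∈ L, x.2 < N x.1 ω} = ⋂ x : L.toFinset, {ω | x.1.2 < N x.1.1 ω} := by
    ext ω
    simp
  rw [hevent, (hN.precomp hinj).meas_iInter (s := fun x => {ω | x.1.2 < N x.1.1 ω})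
      fun x => ⟨Ioi x.1.2, .of_discrete, rfl⟩,
    Finset.prod_coe_sort L.toFinset (fun x => μ {ω | x.2 < N x.1 ω}),
    List.prod_toFinset _ hL.of_map]

def pathSteps : List ℕ → List ℕ → List (List ℕ × ℕ)
  | _, [] => []
  | base, a :: s => (base, a) :: pathSteps (base ++ [a]) s

theorem pathSteps_append (base s t : List ℕ) :
    pathSteps base (s ++ t) = pathSteps base s ++ pathSteps (base ++ s) t := by
  induction s generalizing base with
  | nil => simp [pathSteps]
  | cons a s ih => simp [pathSteps, ih]

theorem map_snd_pathSteps (base s : List ℕ) : (pathSteps base s).map Prod.snd = s := by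
  induction s generalizing base with
  | nil => rfl
  | cons a s ih => simp [pathSteps, ih]

theorem mem_pathSteps {base s : List ℕ} {x : List ℕ × ℕ} :
    x ∈ pathSteps base s ↔ ∃ t, x.1 = base ++ t ∧ t ++ [x.2] <+: s := by
  induction s generalizing base with
  | nil => simp [pathSteps]
  | cons a s ih =>
    simp only [pathSteps, List.mem_cons, ih]
    constructor
    · rintro (rfl | ⟨t, ht, hts⟩)
      · exact ⟨[], by simp, by simp⟩
      · exact ⟨a :: t, by simp [ht], by simpa using hts⟩
    · rintro ⟨_ | ⟨b, t⟩, ht, hts⟩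
      · left
        obtain ⟨x1, x2⟩ := x
        simp_all
      · right
        simp only [List.cons_append, List.cons_prefix_cons] at hts
        exact ⟨t, by simp [ht, hts.1], hts.2⟩

theorem memTree_iff_forall_mem_pathSteps {Ω : Type*} (N : List ℕ → Ω → ℕ) (ω : Ω) (u : List ℕ) :
    memTree N ω u ↔ ∀ x ∈ pathSteps [] u, x.2 < N x.1 ω := by
  simp only [mem_pathSteps, List.nil_append, memTree]
  constructor
  · rintro h ⟨l, a⟩ ⟨t, rfl, ht⟩
    exact h _ a ht
  · intro h l a hl
    exact h (l, a) ⟨l, rfl, hl⟩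

theorem prefix_of_mem_pathSteps {base s : List ℕ} {x : List ℕ × ℕ} (hx : x ∈ pathSteps base s) :
    base <+: x.1 ∧ x.1.length < base.length + s.length := by
  obtain ⟨t, ht, hts⟩ := mem_pathSteps.mp hx
  have := hts.length_le
  simp only [List.length_append, List.length_singleton] at this
  exact ⟨⟨t, ht.symm⟩, by simp [ht]; omega⟩

theorem nodup_map_fst_pathSteps (base s : List ℕ) : ((pathSteps base s).map Prod.fst).Nodup := by
  induction s generalizing base with
  | nil => simp [pathSteps]
  | cons a s ih =>
    refine List.nodup_cons.mpr ⟨fun h => ?_, ih _⟩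
    obtain ⟨x, hx, rfl⟩ := List.mem_map.mp h
    have := (prefix_of_mem_pathSteps hx).1.length_le
    simp at this

theorem measurableSet_memTree {Ω : Type*} [MeasurableSpace Ω] {N : List ℕ → Ω → ℕ}
    (hN : ∀ v, Measurable (N v)) (u : List ℕ) : MeasurableSet {ω | memTree N ω u} := by
  simp only [memTree_iff_forall_mem_pathSteps, Set.ofPred_forall]
  exact .iInter fun x => .iInter fun _ => hN x.1 measurableSet_Ioi

/-- The branch vertex `w` carries the constraints of both of its children `a` and `b` at once, so
that the vertices of the list are distinct and independence applies to it. -/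
def pairSteps (w : List ℕ) (a b : ℕ) (s t : List ℕ) : List (List ℕ × ℕ) :=
  pathSteps [] w ++ (w, max a b) :: (pathSteps (w ++ [a]) s ++ pathSteps (w ++ [b]) t)

theorem memTree_and_memTree_iff_forall_mem_pairSteps {Ω : Type*} (N : List ℕ → Ω → ℕ) (ω : Ω)
    (w : List ℕ) (a b : ℕ) (s t : List ℕ) :
    memTree N ω (w ++ a :: s) ∧ memTree N ω (w ++ b :: t) ↔
      ∀ x ∈ pairSteps w a b s t, x.2 < N x.1 ω := by
  simp only [memTree_iff_forall_mem_pathSteps, pathSteps_append, pathSteps, pairSteps,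
    List.nil_append, List.forall_mem_append, List.forall_mem_cons, max_lt_iff]
  tauto

theorem map_snd_pairSteps (w : List ℕ) (a b : ℕ) (s t : List ℕ) :
    (pairSteps w a b s t).map Prod.snd = w ++ max a b :: (s ++ t) := by
  simp [pairSteps, map_snd_pathSteps]

theorem nodup_map_fst_pairSteps (w : List ℕ) {a b : ℕ} (hab : a ≠ b) (s t : List ℕ) :
    ((pairSteps w a b s t).map Prod.fst).Nodup := by
  have below {x} (hx : x ∈ pathSteps [] w) : x.1.length < w.length := by
    simpa using (prefix_of_mem_pathSteps hx).2
  have above {c u x} (hx : x ∈ pathSteps (w ++ [c]) u) : w.length < x.1.length := by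
    have := (prefix_of_mem_pathSteps hx).1.length_le
    simp at this
    omega
  have apart {u v x y} (hx : x ∈ pathSteps (w ++ [a]) u) (hy : y ∈ pathSteps (w ++ [b]) v) :
      x.1 ≠ y.1 := by
    intro hxy
    have hb := (prefix_of_mem_pathSteps hy).1
    rw [← hxy] at hb
    have := List.prefix_of_prefix_length_le (prefix_of_mem_pathSteps hx).1 hb (by simp)
    exact hab (by simpa using this)
  simp only [pairSteps, List.map_append, List.map_cons, List.nodup_append, List.nodup_cons,
    List.mem_map, List.mem_append, List.mem_cons]
  refine ⟨nodup_map_fst_pathSteps _ _, ⟨?_, nodup_map_fst_pathSteps _ _,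
    nodup_map_fst_pathSteps _ _, ?_⟩, ?_⟩
  · rintro (⟨x, hx, hxw⟩ | ⟨x, hx, hxw⟩) <;> exact (above hx).ne' (congrArg List.length hxw)
  · rintro _ ⟨x, hx, rfl⟩ _ ⟨y, hy, rfl⟩
    exact apart hx hy
  · rintro _ ⟨x, hx, rfl⟩ _ (rfl | ⟨y, hy, rfl⟩ | ⟨y, hy, rfl⟩) hxy
    · exact (below hx).ne (congrArg List.length hxy)
    · exact (below hx).not_gt (hxy ▸ above hy)
    · exact (below hx).not_gt (hxy ▸ above hy)

theorem measure_memTree_and_memTree {Ω : Type*} [MeasurableSpace Ω] {μ : Measure Ω}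
    {N : List ℕ → Ω → ℕ} {ν : Measure ℕ} (hN : iIndepFun N μ)
    (hlaw : ∀ v c, μ {ω | c < N v ω} = ν (Ioi c)) (w : List ℕ) {a b : ℕ} (hab : a ≠ b)
    (s t : List ℕ) :
    μ {ω | memTree N ω (w ++ a :: s) ∧ memTree N ω (w ++ b :: t)} =
      (w.map (ν ∘ Ioi)).prod *
        (ν (Ioi (max a b)) * ((s.map (ν ∘ Ioi)).prod * (t.map (ν ∘ Ioi)).prod)) := by
  simp_rw [memTree_and_memTree_iff_forall_mem_pairSteps,
    hN.measure_forall_mem_lt (nodup_map_fst_pairSteps w hab s t), hlaw]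
  rw [show (fun x : List ℕ × ℕ => ν (Ioi x.2)) = (ν ∘ Ioi) ∘ Prod.snd from rfl,
    ← List.map_map, map_snd_pairSteps]
  simp [List.prod_append]

def divergingPairs {Ω : Type*} (N : List ℕ → Ω → ℕ) (ω : Ω) (k m : ℕ) :
    Set (List ℕ × List ℕ) :=
  {p | p.1.length = k ∧ p.2.length = k ∧ p.1 ≠ p.2 ∧ memTree N ω p.1 ∧ memTree N ω p.2 ∧
    ∃ w a b, a ≠ b ∧ w.length = m ∧ (w ++ [a]) <+: p.1 ∧ (w ++ [b]) <+: p.2}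

abbrev DivergingPair (m r : ℕ) : Type :=
  List.Vector ℕ m × {ab : ℕ × ℕ // ab.1 ≠ ab.2} × List.Vector ℕ r × List.Vector ℕ r

namespace DivergingPair

variable {m r : ℕ}

def toPair : DivergingPair m r → List ℕ × List ℕ
  | (w, ⟨(a, b), _⟩, s, t) => (w.toList ++ a :: s.toList, w.toList ++ b :: t.toList)

theorem toPair_injective : Function.Injective (toPair : DivergingPair m r → _) := by
  rintro ⟨w, ⟨⟨a, b⟩, hab⟩, s, t⟩ ⟨w', ⟨⟨a', b'⟩, hab'⟩, s', t'⟩ h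
  simp only [toPair, Prod.mk.injEq] at h
  obtain ⟨hw, has⟩ := List.append_inj h.1 (by simp)
  obtain ⟨-, hbt⟩ := List.append_inj h.2 (by simp)
  simp only [List.cons.injEq] at has hbt
  obtain ⟨rfl, hs⟩ := has
  obtain ⟨rfl, ht⟩ := hbt
  obtain rfl := List.Vector.toList_injective hw
  obtain rfl := List.Vector.toList_injective hs
  obtain rfl := List.Vector.toList_injective ht
  rfl

theorem divergingPairs_eq_image {Ω : Type*} (N : List ℕ → Ω → ℕ) (ω : Ω) :
    divergingPairs N ω (m + 1 + r) m =
      toPair '' {p : DivergingPair m r | memTree N ω (toPair p).1 ∧ memTree N ω (toPair p).2} := by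
  ext ⟨x, y⟩
  constructor
  · rintro ⟨hx, hy, -, hmx, hmy, w, a, b, hab, hw, ⟨s, rfl⟩, ⟨t, rfl⟩⟩
    simp only [List.length_append, List.length_singleton, hw] at hx hy
    refine ⟨(⟨w, hw⟩, ⟨(a, b), hab⟩, ⟨s, by omega⟩, ⟨t, by omega⟩), ?_, ?_⟩ <;>
      simp_all [toPair]
  · rintro ⟨⟨w, ⟨⟨a, b⟩, hab⟩, s, t⟩, hmem, hxy⟩
    simp only [toPair, Prod.mk.injEq] at hmem hxy
    obtain ⟨rfl, rfl⟩ := hxy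
    exact ⟨by simp; omega, by simp; omega,
      fun h => hab (List.cons.inj (List.append_cancel_left h)).1,
      hmem.1, hmem.2, w.toList, a, b, hab, w.2, by simp, by simp⟩

theorem tsum_measure_memTree_toPair {Ω : Type*} [MeasurableSpace Ω] {μ : Measure Ω}
    {N : List ℕ → Ω → ℕ} {ν : Measure ℕ} (hN : iIndepFun N μ)
    (hlaw : ∀ v c, μ {ω | c < N v ω} = ν (Ioi c)) :
    ∑' p : DivergingPair m r, μ {ω | memTree N ω (toPair p).1 ∧ memTree N ω (toPair p).2} =
      (∫⁻ n, (n : ℝ≥0∞) ∂ν) ^ (m + 2 * r) * ∫⁻ n, (n.descFactorial 2 : ℝ≥0∞) ∂ν := by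
  calc _ = ∑' p : DivergingPair m r, (p.1.toList.map (ν ∘ Ioi)).prod *
          (ν (Ioi (max p.2.1.1.1 p.2.1.1.2)) *
            ((p.2.2.1.toList.map (ν ∘ Ioi)).prod * (p.2.2.2.toList.map (ν ∘ Ioi)).prod)) :=
        tsum_congr fun ⟨w, ⟨⟨a, b⟩, hab⟩, s, t⟩ =>
          measure_memTree_and_memTree hN hlaw w.toList hab s.toList t.toList
    _ = _ := by
      simp only [ENNReal.tsum_prod', ENNReal.tsum_mul_left, ENNReal.tsum_mul_right,
        ENNReal.tsum_vector_prod_map, Function.comp_apply, tsum_measure_Ioi, tsum_measure_Ioi_max]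
      ring

end DivergingPair

theorem stmt8_general {Ω : Type*} [MeasurableSpace Ω] (μ : Measure Ω)
    (d : ℝ) (hd : 0 < d)
    (N : List ℕ → Ω → ℕ)
    (hNmeas : ∀ v, Measurable (N v))
    (hNindep : iIndepFun N μ)
    (hNlaw : ∀ v n, μ {ω | N v ω = n} =
      ENNReal.ofReal (Real.exp (-d) * d ^ n / n.factorial))
    (k ℓ : ℕ) (hℓ1 : 1 ≤ ℓ) (hℓk : ℓ ≤ k) :
    ∫ ω, (({p : List ℕ × List ℕ |
        p.1.length = k ∧ p.2.length = k ∧ p.1 ≠ p.2 ∧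
        memTree N ω p.1 ∧ memTree N ω p.2 ∧
        ∃ w a b, a ≠ b ∧ w.length = k - ℓ ∧
          (w ++ [a]) <+: p.1 ∧ (w ++ [b]) <+: p.2} : Set (List ℕ × List ℕ)).ncard : ℝ)
      ∂μ = d ^ (k + ℓ) := by
  obtain ⟨m, r, rfl, rfl⟩ : ∃ m r, k = m + 1 + r ∧ ℓ = r + 1 := ⟨k - ℓ, ℓ - 1, by omega, by omega⟩
  lift d to ℝ≥0 using hd.le
  have hmap (v : List ℕ) : μ.map (N v) = poissonMeasure d :=
    Measure.ext_of_singleton fun n => by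
      rw [Measure.map_apply (hNmeas v) (measurableSet_singleton n), poissonMeasure_singleton]
      exact hNlaw v n
  have hlaw (v : List ℕ) (c : ℕ) : μ {ω | c < N v ω} = poissonMeasure d (Ioi c) := by
    rw [← hmap v, Measure.map_apply (hNmeas v) measurableSet_Ioi]
    rfl
  have hsum : ∑' p : DivergingPair m r,
      μ {ω | memTree N ω p.toPair.1 ∧ memTree N ω p.toPair.2} =
        (d : ℝ≥0∞) ^ (m + 1 + r + (r + 1)) := by
    rw [DivergingPair.tsum_measure_memTree_toPair hNindep hlaw, lintegral_natCast_poissonMeasure,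
      lintegral_descFactorial_poissonMeasure]
    ring
  change ∫ ω, ((divergingPairs N ω (m + 1 + r) (m + 1 + r - (r + 1))).ncard : ℝ) ∂μ = _
  simp_rw [show m + 1 + r - (r + 1) = m by omega, DivergingPair.divergingPairs_eq_image,
    Set.ncard_image_of_injective _ DivergingPair.toPair_injective]
  refine (integral_ncard_setOf_mem
    (E := fun p : DivergingPair m r => {ω | memTree N ω p.toPair.1 ∧ memTree N ω p.toPair.2})
    (fun p => (measurableSet_memTree hNmeas _).inter (measurableSet_memTree hNmeas _))
    (hsum ▸ ENNReal.pow_ne_top ENNReal.coe_ne_top)).trans ?_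
  rw [hsum, ENNReal.toReal_pow, ENNReal.coe_toReal]

/-- In a Galton–Watson tree with i.i.d. `Poisson(d)` offspring counts, the
expected number of (ordered) pairs of distinct depth-`k` vertices at tree distance exactly
`2ℓ` (i.e. diverging at depth `k − ℓ`) equals `d^(k+ℓ)`, for `1 ≤ ℓ ≤ k`. -/
theorem stmt8 {Ω : Type*} [MeasurableSpace Ω] (μ : Measure Ω) [IsProbabilityMeasure μ]
    (d : ℝ) (hd : 0 < d)
    (N : List ℕ → Ω → ℕ)
    (hNmeas : ∀ v, Measurable (N v))
    (hNindep : iIndepFun N μ)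
    (hNlaw : ∀ v n, μ {ω | N v ω = n} =
      ENNReal.ofReal (Real.exp (-d) * d ^ n / n.factorial))
    (k ℓ : ℕ) (hℓ1 : 1 ≤ ℓ) (hℓk : ℓ ≤ k) :
    ∫ ω, (({p : List ℕ × List ℕ |
        p.1.length = k ∧ p.2.length = k ∧ p.1 ≠ p.2 ∧
        memTree N ω p.1 ∧ memTree N ω p.2 ∧
        ∃ w a b, a ≠ b ∧ w.length = k - ℓ ∧
          (w ++ [a]) <+: p.1 ∧ (w ++ [b]) <+: p.2} : Set (List ℕ × List ℕ)).ncard : ℝ)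
      ∂μ = d ^ (k + ℓ) :=
  stmt8_general μ d hd N hNmeas hNindep hNlaw k ℓ hℓ1 hℓk
end
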